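/- For any constants k, k̄ ∈ ℂ, the operators D_s^{(k,k̄)} close according to the 𝔟𝔪𝔰₄ bracket: for all symmetry parameters s₁, s₂ and all σ ∈ R[u], D_{s₁}^{(k,k̄)}(D_{s₂}^{(k,k̄)}σ) − D_{s₂}^{(k,k̄)}(D_{s₁}^{(k,k̄)}σ) = D_{[s₁,s₂]}^{(k,k̄)}σ. (For (k,k̄) = (3/2,−1/2), (2,0) and ((5−i)/2,(1+i)/2) these are the homogeneous parts of the transformation laws of σ⁰, ∂_uσ⁰ and Ψ⁰_i in equation (16b) with ω̃ = 0.) -/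

import Mathlib

/-!
Common setup: we work over `ℂ` with flat conformal factor `φ̃ = 0`, so `P = √2` and the
eth operators reduce to `ð = √2 ∂_ζ̄` and `ð̄ = √2 ∂_ζ` on the ring `R[u]` of polynomials
in `u` with coefficients in `R = ℂ[ζ,ζ⁻¹,ζ̄,ζ̄⁻¹]`, which also carries `∂_u`.

`R[u]` is modelled as `RU := AddMonoidAlgebra ℂ (ℤ × ℤ × ℕ)`, the monomial
`single (m,n,k) 1` representing `ζ^m ζ̄^n u^k`; `R` is `AddMonoidAlgebra ℂ (ℤ × ℤ)`, and
`ℂ[ζ,ζ⁻¹]`, `ℂ[ζ̄,ζ̄⁻¹]` are copies of `AddMonoidAlgebra ℂ ℤ`, all included into `RU`.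
-/

/-- `R[u]`, with `single (m,n,k) 1 = ζ^m ζ̄^n u^k`. -/
abbrev RU : Type := AddMonoidAlgebra ℂ (ℤ × ℤ × ℕ)

/-- `R = ℂ[ζ,ζ⁻¹,ζ̄,ζ̄⁻¹]`. -/
abbrev LR : Type := AddMonoidAlgebra ℂ (ℤ × ℤ)

/-- A copy of `ℂ[ζ,ζ⁻¹]` (resp. `ℂ[ζ̄,ζ̄⁻¹]`). -/
abbrev W : Type := AddMonoidAlgebra ℂ ℤ

/-- `ð = √2 ∂_ζ̄` on `R[u]`. -/
noncomputable def eth : RU →ₗ[ℂ] RU :=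
  (Finsupp.lsum ℂ fun p : ℤ × ℤ × ℕ =>
    ((Real.sqrt 2 : ℂ) * p.2.1) • AddMonoidAlgebra.lsingle (p.1, p.2.1 - 1, p.2.2)) ∘ₗ (AddMonoidAlgebra.coeffLinearEquiv ℂ).toLinearMap

/-- `ð̄ = √2 ∂_ζ` on `R[u]`. -/
noncomputable def ethBar : RU →ₗ[ℂ] RU :=
  (Finsupp.lsum ℂ fun p : ℤ × ℤ × ℕ =>
    ((Real.sqrt 2 : ℂ) * p.1) • AddMonoidAlgebra.lsingle (p.1 - 1, p.2.1, p.2.2)) ∘ₗ (AddMonoidAlgebra.coeffLinearEquiv ℂ).toLinearMap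

/-- `∂_u` on `R[u]`. -/
noncomputable def du : RU →ₗ[ℂ] RU :=
  (Finsupp.lsum ℂ fun p : ℤ × ℤ × ℕ =>
    (p.2.2 : ℂ) • AddMonoidAlgebra.lsingle (p.1, p.2.1, p.2.2 - 1)) ∘ₗ (AddMonoidAlgebra.coeffLinearEquiv ℂ).toLinearMap

/-- The element `u ∈ R[u]`. -/
noncomputable def uVar : RU := AddMonoidAlgebra.single ((0 : ℤ), (0 : ℤ), (1 : ℕ)) (1 : ℂ)

/-- The inclusion `ℂ[ζ̄,ζ̄⁻¹] ↪ R[u]`, `ζ̄^n ↦ ζ̄^n`. -/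
noncomputable def incY : W →ₗ[ℂ] RU := (Finsupp.lsum ℂ fun n : ℤ => AddMonoidAlgebra.lsingle (0, n, 0)) ∘ₗ (AddMonoidAlgebra.coeffLinearEquiv ℂ).toLinearMap

/-- The inclusion `ℂ[ζ,ζ⁻¹] ↪ R[u]`, `ζ^m ↦ ζ^m`. -/
noncomputable def incYb : W →ₗ[ℂ] RU := (Finsupp.lsum ℂ fun m : ℤ => AddMonoidAlgebra.lsingle (m, 0, 0)) ∘ₗ (AddMonoidAlgebra.coeffLinearEquiv ℂ).toLinearMap

/-- The inclusion `R ↪ R[u]`. -/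
noncomputable def incT : LR →ₗ[ℂ] RU :=
  (Finsupp.lsum ℂ fun q : ℤ × ℤ => AddMonoidAlgebra.lsingle (q.1, q.2, 0)) ∘ₗ (AddMonoidAlgebra.coeffLinearEquiv ℂ).toLinearMap

/-- `ð` on the copy `ℂ[ζ̄,ζ̄⁻¹]` (equivalently `ð̄` on the copy `ℂ[ζ,ζ⁻¹]`):
`√2` times the formal derivative. -/
noncomputable def ethW : W →ₗ[ℂ] W :=
  (Finsupp.lsum ℂ fun n : ℤ => ((Real.sqrt 2 : ℂ) * n) • AddMonoidAlgebra.lsingle (n - 1)) ∘ₗ (AddMonoidAlgebra.coeffLinearEquiv ℂ).toLinearMap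

/-- `ð = √2 ∂_ζ̄` on `R`. -/
noncomputable def ethR : LR →ₗ[ℂ] LR :=
  (Finsupp.lsum ℂ fun q : ℤ × ℤ => ((Real.sqrt 2 : ℂ) * q.2) • AddMonoidAlgebra.lsingle (q.1, q.2 - 1)) ∘ₗ (AddMonoidAlgebra.coeffLinearEquiv ℂ).toLinearMap

/-- `ð̄ = √2 ∂_ζ` on `R`. -/
noncomputable def ethBarR : LR →ₗ[ℂ] LR :=
  (Finsupp.lsum ℂ fun q : ℤ × ℤ => ((Real.sqrt 2 : ℂ) * q.1) • AddMonoidAlgebra.lsingle (q.1 - 1, q.2)) ∘ₗ (AddMonoidAlgebra.coeffLinearEquiv ℂ).toLinearMap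

/-- The inclusion `ℂ[ζ̄,ζ̄⁻¹] ↪ R`. -/
noncomputable def jY : W →ₗ[ℂ] LR := (Finsupp.lsum ℂ fun n : ℤ => AddMonoidAlgebra.lsingle (0, n)) ∘ₗ (AddMonoidAlgebra.coeffLinearEquiv ℂ).toLinearMap

/-- The inclusion `ℂ[ζ,ζ⁻¹] ↪ R`. -/
noncomputable def jYb : W →ₗ[ℂ] LR := (Finsupp.lsum ℂ fun m : ℤ => AddMonoidAlgebra.lsingle (m, 0)) ∘ₗ (AddMonoidAlgebra.coeffLinearEquiv ℂ).toLinearMap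

/-- A symmetry parameter `s = (𝒴, 𝒴̄, T)` with `𝒴 ∈ ℂ[ζ̄,ζ̄⁻¹]`, `𝒴̄ ∈ ℂ[ζ,ζ⁻¹]`
(so that `ð̄𝒴 = 0 = ð𝒴̄`, the conformal Killing equations) and `T ∈ R`. -/
structure SymParam : Type where
  /-- `𝒴`, a function of `ζ̄`. -/
  cY : W
  /-- `𝒴̄`, a function of `ζ`. -/
  cYb : W
  /-- The supertranslation part `T ∈ R`. -/
  T : LR

/-- `ψ_s = ð𝒴 + ð̄𝒴̄ ∈ R`. -/
noncomputable def psiR (s : SymParam) : LR := jY (ethW s.cY) + jYb (ethW s.cYb)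

/-- `f_s = T + (u/2) ψ_s ∈ R[u]`. -/
noncomputable def fOf (s : SymParam) : RU :=
  incT s.T + (1 / 2 : ℂ) • (uVar * incT (psiR s))

/-- The `𝔟𝔪𝔰₄` bracket `[s₁,s₂] = ŝ` on symmetry parameters:
`𝒴̂ = 𝒴₁ð𝒴₂ − 𝒴₂ð𝒴₁`, `𝒴̄̂ = 𝒴̄₁ð̄𝒴̄₂ − 𝒴̄₂ð̄𝒴̄₁`,
`T̂ = 𝒴₁ðT₂ + 𝒴̄₁ð̄T₂ − 𝒴₂ðT₁ − 𝒴̄₂ð̄T₁ − ½(ψ₁T₂ − ψ₂T₁)`. -/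
noncomputable def sBracket (s₁ s₂ : SymParam) : SymParam where
  cY := s₁.cY * ethW s₂.cY - s₂.cY * ethW s₁.cY
  cYb := s₁.cYb * ethW s₂.cYb - s₂.cYb * ethW s₁.cYb
  T := jY s₁.cY * ethR s₂.T + jYb s₁.cYb * ethBarR s₂.T
      - jY s₂.cY * ethR s₁.T - jYb s₂.cYb * ethBarR s₁.T
      - (1 / 2 : ℂ) • (psiR s₁ * s₂.T - psiR s₂ * s₁.T)

/-- The first-order differential operator
`D_s^{(k,k̄)} = f_s∂_u + 𝒴ð + 𝒴̄ð̄ + k(ð𝒴) + k̄(ð̄𝒴̄)` on `R[u]`, the last two terms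
acting by multiplication. -/
noncomputable def Dop (k kb : ℂ) (s : SymParam) : RU →ₗ[ℂ] RU :=
  (LinearMap.mulLeft ℂ (fOf s)).comp du
    + (LinearMap.mulLeft ℂ (incY s.cY)).comp eth
    + (LinearMap.mulLeft ℂ (incYb s.cYb)).comp ethBar
    + k • LinearMap.mulLeft ℂ (eth (incY s.cY))
    + kb • LinearMap.mulLeft ℂ (ethBar (incYb s.cYb))

/-!
`D_s^{(k,k̄)}` is the vector field `X_s = f_s ∂_u + 𝒴 ð + 𝒴̄ ð̄`, a derivation of `R[u]`, plus
multiplication by `k ð𝒴 + k̄ ð̄𝒴̄`. For derivations `X, Y` the commutator of `X + a` and `Y + b` is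
`[X, Y] + (X b - Y a)`, and since `∂_u`, `ð`, `ð̄` commute, `[X_{s₁}, X_{s₂}]` is the vector field
whose coefficients are `X_{s₁}(coefficient of X_{s₂}) - X_{s₂}(coefficient of X_{s₁})`. Expanding
these with the Leibniz rule gives `f_{[s₁,s₂]}`, `𝒴̂` and `𝒴̄̂`; the `-½(ψ₁T₂ - ψ₂T₁)` term of `T̂`
comes from `∂_u` hitting the `u/2 ψ` part of `f`. Likewise the multiplication terms combine to
`k ð𝒴̂ + k̄ ð̄𝒴̄̂`, because `ð𝒴` depends on `ζ̄` alone.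
-/

namespace AddMonoidAlgebra

variable {k G : Type*} [CommSemiring k] [AddCommMonoid G]

-- `hτ` is only asked for where `φ g ≠ 0`, so that `τ` may use truncated subtraction,
-- as for `∂_u` on exponents in `ℕ`.
theorem leibniz_of_apply_single (L : AddMonoidAlgebra k G →ₗ[k] AddMonoidAlgebra k G)
    (φ : G → k) (τ : G → G) (hL : ∀ g c, L (single g c) = φ g • single (τ g) c)
    (hφ : ∀ g h, φ (g + h) = φ g + φ h) (hτ : ∀ g h, φ g ≠ 0 → τ (g + h) = τ g + h)
    (x y : AddMonoidAlgebra k G) : L (x * y) = x * L y + y * L x := by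
  induction x using induction_linear with
  | zero => simp
  | add x x' hx hx' => simp only [add_mul, map_add, hx, hx']; ring
  | single g c =>
    induction y using induction_linear with
    | zero => simp
    | add y y' hy hy' => simp only [mul_add, map_add, hy, hy']; ring
    | single h d =>
      have shift : ∀ g h, φ g • single (τ (g + h)) (c * d) = φ g • single (τ g + h) (c * d) := by
        intro g h
        by_cases hg : φ g = 0
        · simp [hg]
        · rw [hτ g h hg]
      rw [single_mul_single, hL, hL, hL, hφ, add_smul, mul_smul_comm, mul_smul_comm,
        single_mul_single, single_mul_single, shift, add_comm g h, shift, add_comm, mul_comm d,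
        add_comm h, add_comm (τ h)]

theorem map_mul_of_apply_single {H : Type*} [AddCommMonoid H]
    (L : AddMonoidAlgebra k G →ₗ[k] AddMonoidAlgebra k H) (f : G → H)
    (hL : ∀ g c, L (single g c) = single (f g) c) (hf : ∀ g h, f (g + h) = f g + f h)
    (x y : AddMonoidAlgebra k G) : L (x * y) = L x * L y := by
  induction x using induction_linear with
  | zero => simp
  | add x x' hx hx' => simp only [add_mul, map_add, hx, hx']
  | single g c =>
    induction y using induction_linear with
    | zero => simp
    | add y y' hy hy' => simp only [mul_add, map_add, hy, hy']
    | single h d => rw [single_mul_single, hL, hL, hL, single_mul_single, hf]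

end AddMonoidAlgebra

namespace Derivation

variable {R A : Type*} [CommRing R] [CommRing A] [Algebra R A]

theorem lie_eq_of_commute {D₁ D₂ D₃ X Y : Derivation R A A}
    (h₁₂ : ∀ x, D₁ (D₂ x) = D₂ (D₁ x)) (h₁₃ : ∀ x, D₁ (D₃ x) = D₃ (D₁ x))
    (h₂₃ : ∀ x, D₂ (D₃ x) = D₃ (D₂ x)) {a₁ a₂ a₃ b₁ b₂ b₃ : A}
    (hX : X = a₁ • D₁ + a₂ • D₂ + a₃ • D₃) (hY : Y = b₁ • D₁ + b₂ • D₂ + b₃ • D₃) :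
    ⁅X, Y⁆ = (X b₁ - Y a₁) • D₁ + (X b₂ - Y a₂) • D₂ + (X b₃ - Y a₃) • D₃ := by
  ext x
  subst hX hY
  simp only [commutator_apply, add_apply, smul_apply, smul_eq_mul, map_add, leibniz, h₁₂, h₁₃,
    h₂₃]
  ring

theorem commutator_add_mulLeft (D E : Derivation R A A) (a b x : A) :
    ((D : A →ₗ[R] A) + LinearMap.mulLeft R a) (((E : A →ₗ[R] A) + LinearMap.mulLeft R b) x)
      - ((E : A →ₗ[R] A) + LinearMap.mulLeft R b) (((D : A →ₗ[R] A) + LinearMap.mulLeft R a) x)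
      = ⁅D, E⁆ x + (D b - E a) * x := by
  simp only [LinearMap.add_apply, coeFn_coe, LinearMap.mulLeft_apply, map_add, leibniz,
    smul_eq_mul, commutator_apply]
  ring

end Derivation

open AddMonoidAlgebra

-- `W` is reducibly `LaurentPolynomial ℂ`, whose simp set rewrites `single n c` to `C c * T n`.
section Monomials

variable (p : ℤ × ℤ × ℕ) (q : ℤ × ℤ) (n : ℤ) (c : ℂ)

@[simp] lemma eth_single :
    eth (single p c) = ((√2 : ℂ) * p.2.1) • single (p.1, p.2.1 - 1, p.2.2) c := by
  simp [eth]

@[simp] lemma ethBar_single :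
    ethBar (single p c) = ((√2 : ℂ) * p.1) • single (p.1 - 1, p.2.1, p.2.2) c := by
  simp [ethBar]

@[simp] lemma du_single :
    du (single p c) = (p.2.2 : ℂ) • single (p.1, p.2.1, p.2.2 - 1) c := by
  simp [du]

@[simp] lemma ethW_single : ethW (single n c) = ((√2 : ℂ) * n) • single (n - 1) c := by
  simp [ethW, -LaurentPolynomial.single_eq_C_mul_T]

@[simp] lemma ethR_single :
    ethR (single q c) = ((√2 : ℂ) * q.2) • single (q.1, q.2 - 1) c := by
  simp [ethR]

@[simp] lemma ethBarR_single :
    ethBarR (single q c) = ((√2 : ℂ) * q.1) • single (q.1 - 1, q.2) c := by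
  simp [ethBarR]

@[simp] lemma incY_single : incY (single n c) = single (0, n, 0) c := by
  simp [incY, -LaurentPolynomial.single_eq_C_mul_T]

@[simp] lemma incYb_single : incYb (single n c) = single (n, 0, 0) c := by
  simp [incYb, -LaurentPolynomial.single_eq_C_mul_T]

@[simp] lemma incT_single : incT (single q c) = single (q.1, q.2, 0) c := by
  simp [incT]

@[simp] lemma jY_single : jY (single n c) = single (0, n) c := by
  simp [jY, -LaurentPolynomial.single_eq_C_mul_T]

@[simp] lemma jYb_single : jYb (single n c) = single (n, 0) c := by
  simp [jYb, -LaurentPolynomial.single_eq_C_mul_T]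

end Monomials

section Derivations

lemma eth_mul (x y : RU) : eth (x * y) = x * eth y + y * eth x :=
  leibniz_of_apply_single eth (fun p => √2 * p.2.1) (fun p => (p.1, p.2.1 - 1, p.2.2))
    eth_single (fun g h => by simp only [Prod.snd_add, Prod.fst_add, Int.cast_add]; ring)
    (fun g h _ => by ext <;> simp only [Prod.fst_add, Prod.snd_add]; ring) x y

lemma ethBar_mul (x y : RU) : ethBar (x * y) = x * ethBar y + y * ethBar x :=
  leibniz_of_apply_single ethBar (fun p => √2 * p.1) (fun p => (p.1 - 1, p.2.1, p.2.2))
    ethBar_single (fun g h => by simp only [Prod.fst_add, Int.cast_add]; ring)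
    (fun g h _ => by ext <;> simp only [Prod.fst_add, Prod.snd_add]; ring) x y

lemma du_mul (x y : RU) : du (x * y) = x * du y + y * du x :=
  leibniz_of_apply_single du (fun p => p.2.2) (fun p => (p.1, p.2.1, p.2.2 - 1))
    du_single (fun g h => by simp only [Prod.snd_add, Nat.cast_add])
    (fun g h hg => by
      have : g.2.2 ≠ 0 := by exact_mod_cast hg
      ext <;> simp only [Prod.fst_add, Prod.snd_add]; omega) x y

noncomputable def ethDer : Derivation ℂ RU RU := .mk' eth eth_mul

noncomputable def ethBarDer : Derivation ℂ RU RU := .mk' ethBar ethBar_mul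

noncomputable def duDer : Derivation ℂ RU RU := .mk' du du_mul

lemma du_eth (x : RU) : du (eth x) = eth (du x) := by
  induction x using induction_linear with
  | zero => simp
  | add x y hx hy => simp only [map_add, hx, hy]
  | single p c => simp only [du_single, eth_single, map_smul, smul_smul, mul_comm]

lemma du_ethBar (x : RU) : du (ethBar x) = ethBar (du x) := by
  induction x using induction_linear with
  | zero => simp
  | add x y hx hy => simp only [map_add, hx, hy]
  | single p c => simp only [du_single, ethBar_single, map_smul, smul_smul, mul_comm]

lemma ethBar_eth (x : RU) : ethBar (eth x) = eth (ethBar x) := by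
  induction x using induction_linear with
  | zero => simp
  | add x y hx hy => simp only [map_add, hx, hy]
  | single p c => simp only [eth_single, ethBar_single, map_smul, smul_smul, mul_comm]

end Derivations

section Inclusions

variable (w w' : W) (t t' : LR)

@[simp] lemma eth_incY : eth (incY w) = incY (ethW w) := by
  induction w using induction_linear <;> simp_all [-LaurentPolynomial.single_eq_C_mul_T]

@[simp] lemma ethBar_incY : ethBar (incY w) = 0 := by
  induction w using induction_linear <;> simp_all [-LaurentPolynomial.single_eq_C_mul_T]

@[simp] lemma du_incY : du (incY w) = 0 := by
  induction w using induction_linear <;> simp_all [-LaurentPolynomial.single_eq_C_mul_T]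

@[simp] lemma eth_incYb : eth (incYb w) = 0 := by
  induction w using induction_linear <;> simp_all [-LaurentPolynomial.single_eq_C_mul_T]

@[simp] lemma ethBar_incYb : ethBar (incYb w) = incYb (ethW w) := by
  induction w using induction_linear <;> simp_all [-LaurentPolynomial.single_eq_C_mul_T]

@[simp] lemma du_incYb : du (incYb w) = 0 := by
  induction w using induction_linear <;> simp_all [-LaurentPolynomial.single_eq_C_mul_T]

@[simp] lemma eth_incT : eth (incT t) = incT (ethR t) := by
  induction t using induction_linear <;> simp_all

@[simp] lemma ethBar_incT : ethBar (incT t) = incT (ethBarR t) := by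
  induction t using induction_linear <;> simp_all

@[simp] lemma du_incT : du (incT t) = 0 := by
  induction t using induction_linear <;> simp_all

@[simp] lemma incT_jY : incT (jY w) = incY w := by
  induction w using induction_linear <;> simp_all [-LaurentPolynomial.single_eq_C_mul_T]

@[simp] lemma incT_jYb : incT (jYb w) = incYb w := by
  induction w using induction_linear <;> simp_all [-LaurentPolynomial.single_eq_C_mul_T]

@[simp] lemma incT_mul : incT (t * t') = incT t * incT t' :=
  map_mul_of_apply_single incT _ incT_single (fun _ _ => rfl) t t'

@[simp] lemma incY_mul : incY (w * w') = incY w * incY w' :=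
  map_mul_of_apply_single incY _ incY_single (fun _ _ => by simp) w w'

@[simp] lemma incYb_mul : incYb (w * w') = incYb w * incYb w' :=
  map_mul_of_apply_single incYb _ incYb_single (fun _ _ => by simp) w w'

@[simp] lemma eth_uVar : eth uVar = 0 := by simp [uVar]

@[simp] lemma ethBar_uVar : ethBar uVar = 0 := by simp [uVar]

@[simp] lemma du_uVar : du uVar = 1 := by simp [uVar, one_def, Prod.mk_zero_zero]

end Inclusions

noncomputable def vectorField (s : SymParam) : Derivation ℂ RU RU :=
  fOf s • duDer + incY s.cY • ethDer + incYb s.cYb • ethBarDer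

noncomputable def weightFactor (k kb : ℂ) (s : SymParam) : RU :=
  k • eth (incY s.cY) + kb • ethBar (incYb s.cYb)

lemma vectorField_apply (s : SymParam) (x : RU) :
    vectorField s x = fOf s * du x + incY s.cY * eth x + incYb s.cYb * ethBar x := rfl

lemma Dop_eq_vectorField_add_mulLeft (k kb : ℂ) (s : SymParam) :
    Dop k kb s = (vectorField s : RU →ₗ[ℂ] RU) + LinearMap.mulLeft ℂ (weightFactor k kb s) := by
  ext x
  simp [Dop, weightFactor, vectorField_apply, add_mul, add_assoc]

lemma fOf_eq (s : SymParam) :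
    fOf s = incT s.T + (1 / 2 : ℂ) • (uVar * (eth (incY s.cY) + ethBar (incYb s.cYb))) := by
  simp [fOf, psiR]

section Bracket

variable (s₁ s₂ : SymParam)

lemma incT_sBracket_T :
    incT (sBracket s₁ s₂).T = incY s₁.cY * eth (incT s₂.T) + incYb s₁.cYb * ethBar (incT s₂.T)
      - incY s₂.cY * eth (incT s₁.T) - incYb s₂.cYb * ethBar (incT s₁.T)
      - (1 / 2 : ℂ) • ((eth (incY s₁.cY) + ethBar (incYb s₁.cYb)) * incT s₂.T
        - (eth (incY s₂.cY) + ethBar (incYb s₂.cYb)) * incT s₁.T) := by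
  simp [sBracket, psiR]

lemma incY_sBracket_cY :
    incY (sBracket s₁ s₂).cY = incY s₁.cY * eth (incY s₂.cY) - incY s₂.cY * eth (incY s₁.cY) := by
  simp [sBracket]

lemma incYb_sBracket_cYb :
    incYb (sBracket s₁ s₂).cYb
      = incYb s₁.cYb * ethBar (incYb s₂.cYb) - incYb s₂.cYb * ethBar (incYb s₁.cYb) := by
  simp [sBracket]

lemma vectorField_fOf_sub :
    vectorField s₁ (fOf s₂) - vectorField s₂ (fOf s₁) = fOf (sBracket s₁ s₂) := by
  simp only [vectorField_apply, fOf_eq, incT_sBracket_T, incY_sBracket_cY, incYb_sBracket_cYb,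
    map_add, map_sub, map_smul, map_zero, eth_mul, ethBar_mul, du_mul, du_eth, ethBar_eth,
    eth_incT, ethBar_incT, du_incT, ethBar_incY, du_incY, eth_incYb, ethBar_incYb, du_incYb,
    eth_uVar, ethBar_uVar, du_uVar]
  simp only [Algebra.smul_def]
  ring

lemma vectorField_incY_sub :
    vectorField s₁ (incY s₂.cY) - vectorField s₂ (incY s₁.cY) = incY (sBracket s₁ s₂).cY := by
  simp only [vectorField_apply, incY_sBracket_cY, du_incY, ethBar_incY]
  ring

lemma vectorField_incYb_sub :
    vectorField s₁ (incYb s₂.cYb) - vectorField s₂ (incYb s₁.cYb)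
      = incYb (sBracket s₁ s₂).cYb := by
  simp only [vectorField_apply, incYb_sBracket_cYb, du_incYb, eth_incYb]
  ring

lemma lie_vectorField : ⁅vectorField s₁, vectorField s₂⁆ = vectorField (sBracket s₁ s₂) := by
  rw [Derivation.lie_eq_of_commute (D₁ := duDer) (D₂ := ethDer) (D₃ := ethBarDer)
      (X := vectorField s₁) (Y := vectorField s₂) du_eth du_ethBar
      (fun x => (ethBar_eth x).symm) rfl rfl,
    vectorField_fOf_sub, vectorField_incY_sub, vectorField_incYb_sub]
  rfl

lemma vectorField_weightFactor_sub (k kb : ℂ) :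
    vectorField s₁ (weightFactor k kb s₂) - vectorField s₂ (weightFactor k kb s₁)
      = weightFactor k kb (sBracket s₁ s₂) := by
  simp only [weightFactor, vectorField_apply, incY_sBracket_cY, incYb_sBracket_cYb, map_add,
    map_sub, map_smul, map_zero, eth_mul, ethBar_mul, du_eth, ethBar_eth, ethBar_incY, du_incY,
    eth_incYb, ethBar_incYb, du_incYb]
  simp only [Algebra.smul_def]
  ring

end Bracket

/-- For any constants `k, k̄ ∈ ℂ`, the operators `D_s^{(k,k̄)}` close
according to the `𝔟𝔪𝔰₄` bracket: for all symmetry parameters `s₁, s₂` and all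
`σ ∈ R[u]`, `D_{s₁}^{(k,k̄)}(D_{s₂}^{(k,k̄)}σ) − D_{s₂}^{(k,k̄)}(D_{s₁}^{(k,k̄)}σ)
= D_{[s₁,s₂]}^{(k,k̄)}σ`.  (For `(k,k̄) = (3/2,−1/2)`, `(2,0)` and `((5−i)/2,(1+i)/2)`
these are the homogeneous parts of the transformation laws of `σ⁰`, `∂_uσ⁰` and `Ψ⁰_i`.) -/
theorem Dop_closes (k kb : ℂ) (s₁ s₂ : SymParam) (σ : RU) :
    Dop k kb s₁ (Dop k kb s₂ σ) - Dop k kb s₂ (Dop k kb s₁ σ)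
      = Dop k kb (sBracket s₁ s₂) σ := by
  simp only [Dop_eq_vectorField_add_mulLeft, Derivation.commutator_add_mulLeft, lie_vectorField,
    vectorField_weightFactor_sub]
  rfl
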